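/- arXiv:1511.05334 — 2 statements merged into one kernel-verified Lean document; each statement's English description precedes it below -/
import Mathlib

section
/- Define S_{∞,n} by S_{∞,0} = S_{∞,1} = 0 and S_{∞,n+2} = 1 + S_{∞,n} + Σ_{k=0}^{n} S_{∞,k} S_{∞,n-k}. Then for all m and n with m ≥ n - 1 (i.e., m + 1 ≥ n), S_{m,n} = S_{∞,n}. -/
def S : ℕ → ℕ → ℕ
  | _, 0 => 0
  | _, 1 => 0
  | m, n + 2 => (if m ≥ n + 1 then 1 else 0) + S (m + 1) n +
      ∑ k ∈ (Finset.range (n + 1)).attach, S m k * S m (n - k)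
  termination_by _ n => n
  decreasing_by
    · omega
    · exact Nat.lt_of_le_of_lt (Nat.le_of_lt_succ (Finset.mem_range.mp k.2)) (by omega)
    · exact Nat.lt_of_le_of_lt (Nat.sub_le _ _) (by omega)

def Sinf : ℕ → ℕ
  | 0 => 0
  | 1 => 0
  | n + 2 => 1 + Sinf n + ∑ k ∈ (Finset.range (n + 1)).attach, Sinf k * Sinf (n - k)
  termination_by n => n
  decreasing_by
    · omega
    · exact Nat.lt_of_le_of_lt (Nat.le_of_lt_succ (Finset.mem_range.mp k.2)) (by omega)
    · exact Nat.lt_of_le_of_lt (Nat.sub_le _ _) (by omega)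

/-- For m ≥ n - 1 (i.e. m + 1 ≥ n), the bound on free indices is inactive:
S_{m,n} = S_{∞,n}. -/
theorem S_eq_Sinf_of_le (m n : ℕ) (h : m + 1 ≥ n) : S m n = Sinf n := by
  induction n using Nat.strong_induction_on generalizing m with
  | _ n ih =>
    match n, h with
    | 0, _ => rw [S, Sinf]
    | 1, _ => rw [S, Sinf]
    | (n + 2), h =>
      rw [S, Sinf]
      have h1 : m ≥ n + 1 := by omega
      rw [if_pos h1, ih n (by omega) (m+1) (by omega)]
      congr 1
      apply Finset.sum_congr rfl
      intro k _
      have hk : k.1 < n + 1 := Finset.mem_range.mp k.2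
      rw [ih k.1 (by omega) m (by omega), ih (n - k.1) (by omega) m (by omega)]
end

section
/- The formal power series F(z) = Σ_{n≥0} S_{∞,n} z^n satisfies the polynomial identity z² F(z)² − (1 − z²) F(z) + z²/(1−z) = 0 as formal power series, equivalently (1−z)·z²·F(z)² − (1−z)(1−z²)·F(z) + z² = 0. -/
open PowerSeries

/-! The proof is the coefficient-wise reading of the functional equation
`F = z² (1/(1−z) + F + F²)` of the recurrence; multiplying it by `1 − z` clears the
geometric series and gives the quadratic identity. -/

theorem Sinf_add_two (n : ℕ) :
    Sinf (n + 2) = 1 + Sinf n + ∑ k ∈ Finset.range (n + 1), Sinf k * Sinf (n - k) := by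
  rw [Sinf, Finset.sum_attach (Finset.range (n + 1)) fun k => Sinf k * Sinf (n - k)]

theorem PowerSeries.coeff_mk_sq {R : Type*} [CommSemiring R] (f : ℕ → R) (n : ℕ) :
    coeff n (mk f ^ 2) = ∑ k ∈ Finset.range (n + 1), f k * f (n - k) := by
  rw [sq, coeff_mul, Finset.Nat.sum_antidiagonal_eq_sum_range_succ_mk]
  simp only [coeff_mk]

theorem mk_Sinf_eq_X_sq_mul {R : Type*} [CommSemiring R] :
    let F : R⟦X⟧ := mk fun n => (Sinf n : R)
    F = X ^ 2 * (mk 1 + F + F ^ 2) := by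
  intro F
  ext n
  rw [coeff_X_pow_mul']
  rcases n with _ | _ | n
  · simp [F, Sinf]
  · simp [F, Sinf]
  · simp [F, coeff_mk_sq, Sinf_add_two]

/-- The generating function F of all binary lambda terms satisfies
(1−z)·z²·F(z)² − (1−z)(1−z²)·F(z) + z² = 0 as formal power series over ℚ. -/
theorem genFun_quadratic :
    let F : PowerSeries ℚ := PowerSeries.mk fun n => (Sinf n : ℚ)
    (1 - X) * X ^ 2 * F ^ 2 - (1 - X) * (1 - X ^ 2) * F + X ^ 2 = 0 := by
  intro F
  linear_combination -(1 - X) * mk_Sinf_eq_X_sq_mul (R := ℚ) - X ^ 2 * mk_one_mul_one_sub_eq_one ℚ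
end
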